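/- arXiv:2104.11126 — 4 statements merged into one kernel-verified Lean document; each statement's English description precedes it below -/
import Mathlib

section
/- Let κ>0 and ν∈(−1,1/2], and let (p̂_rad,p̂_tan) and (p̃_rad,p̃_tan) be two elastic constitutive functions for spherically symmetric bodies with bulk modulus κ and Poisson ratio ν. Then the two constitutive functions are dynamically equivalent if and only if there exists a C² function q:(0,∞)→ℝ with q(1)=0 and q'(1)=0 such that, for all δ,η>0, p̂_rad(δ,η)=p̃_rad(δ,η)+q(η) and p̂_tan(δ,η)=p̃_tan(δ,η)+q(η)−(3/2)(η−δ)q'(η). -/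
open Real Set Filter Topology

noncomputable section

/-- An elastic constitutive function for spherically symmetric bodies with
bulk modulus `κ` and Poisson ratio `ν`: a `C²` map `(p̂_rad, p̂_tan)` on `(0,∞)²`
satisfying the isotropy condition at `δ = η`, the normalization at the reference
configuration `(1,1)`, and compatibility with linear elasticity. -/
def IsElasticConst (κ ν : ℝ) (prad ptan : ℝ → ℝ → ℝ) : Prop :=
  ContDiffOn ℝ 2 (fun p : ℝ × ℝ => prad p.1 p.2) (Ioi 0 ×ˢ Ioi 0) ∧
  ContDiffOn ℝ 2 (fun p : ℝ × ℝ => ptan p.1 p.2) (Ioi 0 ×ˢ Ioi 0) ∧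
  (∀ δ : ℝ, 0 < δ → prad δ δ = ptan δ δ) ∧
  (∀ δ : ℝ, 0 < δ → deriv (fun η => prad δ η + 2 * ptan δ η) δ = 0) ∧
  prad 1 1 = 0 ∧ ptan 1 1 = 0 ∧
  deriv (fun d => prad d 1) 1 = 3 * κ * (1 - ν) / (1 + ν) ∧
  deriv (fun η => prad 1 η) 1 = -(2 * κ * (1 - 2 * ν) / (1 + ν)) ∧
  deriv (fun d => ptan d 1) 1 = 3 * κ * ν / (1 + ν) ∧
  deriv (fun η => ptan 1 η) 1 = κ * (1 - 2 * ν) / (1 + ν)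

/-- `â(δ,η) = ∂_δ p̂_rad(δ,η)`. -/
def ahat (prad : ℝ → ℝ → ℝ) (δ η : ℝ) : ℝ := deriv (fun d => prad d η) δ

/-- `b̂(δ,η) = 2(p̂_tan − p̂_rad)/(η − δ) + 3 ∂_η p̂_rad(δ,η)` (for `η ≠ δ`). -/
def bhat (prad ptan : ℝ → ℝ → ℝ) (δ η : ℝ) : ℝ :=
  2 * (ptan δ η - prad δ η) / (η - δ) + 3 * deriv (fun e => prad δ e) η

/-- Two constitutive functions are dynamically equivalent if their `â` coincide on
`(0,∞)²` and their `b̂` coincide off the diagonal. -/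
def DynEquiv (prad1 ptan1 prad2 ptan2 : ℝ → ℝ → ℝ) : Prop :=
  (∀ δ η : ℝ, 0 < δ → 0 < η → ahat prad1 δ η = ahat prad2 δ η) ∧
  (∀ δ η : ℝ, 0 < δ → 0 < η → η ≠ δ →
    bhat prad1 ptan1 δ η = bhat prad2 ptan2 δ η)

/-!
Equality of `â = ∂_δ p_rad` says that `p̂_rad − p̃_rad` has vanishing `δ`-derivative on the
quadrant, so it is a function `q(η)` alone, namely `q(η) = p̂_rad(1,η) − p̃_rad(1,η)`; then
`p_rad(1,1) = 0` and the prescribed `∂_η p_rad(1,1)` give `q(1) = q'(1) = 0`. Once the radial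
parts differ by `q(η)`, `b̂ − b̃ = 2((p̂_tan − p̃_tan) − q)/(η − δ) + 3q'`, so equality of `b̂` off
the diagonal is exactly the tangential formula there, while on the diagonal that formula
reduces to the isotropy condition `p_rad = p_tan`.
-/

section Slices

variable {F : ℝ → ℝ → ℝ}

theorem DifferentiableOn.differentiableAt_slice_left {U : Set (ℝ × ℝ)} {x y : ℝ}
    (hF : DifferentiableOn ℝ (fun p : ℝ × ℝ => F p.1 p.2) U) (hU : IsOpen U) (hxy : (x, y) ∈ U) :
    DifferentiableAt ℝ (fun d => F d y) x :=
  (hF.differentiableAt (hU.mem_nhds hxy)).comp (f := fun d => (d, y)) x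
    (differentiableAt_id.prodMk (differentiableAt_const y))

theorem DifferentiableOn.differentiableAt_slice_right {U : Set (ℝ × ℝ)} {x y : ℝ}
    (hF : DifferentiableOn ℝ (fun p : ℝ × ℝ => F p.1 p.2) U) (hU : IsOpen U) (hxy : (x, y) ∈ U) :
    DifferentiableAt ℝ (fun e => F x e) y :=
  (hF.differentiableAt (hU.mem_nhds hxy)).comp (f := fun e => (x, e)) y
    ((differentiableAt_const x).prodMk differentiableAt_id)

theorem ContDiffOn.slice_right {n : WithTop ℕ∞} {s t : Set ℝ} {x : ℝ}
    (hF : ContDiffOn ℝ n (fun p : ℝ × ℝ => F p.1 p.2) (s ×ˢ t)) (hx : x ∈ s) :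
    ContDiffOn ℝ n (fun e => F x e) t :=
  hF.comp (contDiff_const.prodMk contDiff_id).contDiffOn fun _ hy => ⟨hx, hy⟩

end Slices

theorem eq_add_sub_of_ahat_eq {F G : ℝ → ℝ → ℝ}
    (hF : DifferentiableOn ℝ (fun p : ℝ × ℝ => F p.1 p.2) (Ioi 0 ×ˢ Ioi 0))
    (hG : DifferentiableOn ℝ (fun p : ℝ × ℝ => G p.1 p.2) (Ioi 0 ×ˢ Ioi 0))
    (ha : ∀ δ η : ℝ, 0 < δ → 0 < η → ahat F δ η = ahat G δ η)
    {δ η : ℝ} (hδ : 0 < δ) (hη : 0 < η) :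
    F δ η = G δ η + (F 1 η - G 1 η) := by
  have hU : IsOpen (Ioi (0 : ℝ) ×ˢ Ioi (0 : ℝ)) := isOpen_Ioi.prod isOpen_Ioi
  obtain ⟨a, hshift⟩ := isOpen_Ioi.exists_eq_add_of_deriv_eq isPreconnected_Ioi
    (fun d hd => (hF.differentiableAt_slice_left hU ⟨hd, hη⟩).differentiableWithinAt)
    (fun d hd => (hG.differentiableAt_slice_left hU ⟨hd, hη⟩).differentiableWithinAt)
    (fun d hd => ha d η hd hη)
  have hδ' : F δ η = G δ η + a := hshift hδ
  have h1 : F 1 η = G 1 η + a := hshift (mem_Ioi.mpr one_pos)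
  rw [hδ', h1]
  ring

theorem ahat_eq_ahat_of_eq_add {F G : ℝ → ℝ → ℝ} {q : ℝ → ℝ}
    (hFG : ∀ δ η : ℝ, 0 < δ → 0 < η → F δ η = G δ η + q η)
    {δ η : ℝ} (hδ : 0 < δ) (hη : 0 < η) :
    ahat F δ η = ahat G δ η :=
  (EqOn.eventuallyEq_of_mem (fun d hd => hFG d η hd hη) (isOpen_Ioi.mem_nhds hδ)).deriv_eq.trans
    (deriv_add_const _)

theorem deriv_slice_right_eq_add {F G : ℝ → ℝ → ℝ} {q : ℝ → ℝ} {δ η : ℝ}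
    (hG : DifferentiableOn ℝ (fun p : ℝ × ℝ => G p.1 p.2) (Ioi 0 ×ˢ Ioi 0))
    (hFG : ∀ e : ℝ, 0 < e → F δ e = G δ e + q e) (hδ : 0 < δ) (hη : 0 < η)
    (hq : DifferentiableAt ℝ q η) :
    deriv (fun e => F δ e) η = deriv (fun e => G δ e) η + deriv q η := by
  have hGδ : DifferentiableAt ℝ (fun e => G δ e) η :=
    hG.differentiableAt_slice_right (isOpen_Ioi.prod isOpen_Ioi) ⟨hδ, hη⟩
  rw [(EqOn.eventuallyEq_of_mem (fun e he => hFG e he) (isOpen_Ioi.mem_nhds hη)).deriv_eq,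
    deriv_fun_add hGδ hq]

theorem bhat_eq_bhat_iff {F Ft G Gt : ℝ → ℝ → ℝ} {q : ℝ → ℝ} {δ η : ℝ} (hne : η ≠ δ)
    (hrad : F δ η = G δ η + q η)
    (hderiv : deriv (fun e => F δ e) η = deriv (fun e => G δ e) η + deriv q η) :
    bhat F Ft δ η = bhat G Gt δ η ↔
      Ft δ η = Gt δ η + q η - (3/2) * (η - δ) * deriv q η := by
  have hne' : η - δ ≠ 0 := sub_ne_zero.mpr hne
  unfold bhat
  rw [hrad, hderiv]
  constructor <;> intro h
  · field_simp at h
    linarith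
  · rw [h]
    field_simp
    ring

theorem dynEquiv_iff_exists_q_general (κ ν : ℝ)
    (prad1 ptan1 prad2 ptan2 : ℝ → ℝ → ℝ)
    (h1 : IsElasticConst κ ν prad1 ptan1) (h2 : IsElasticConst κ ν prad2 ptan2) :
    DynEquiv prad1 ptan1 prad2 ptan2 ↔
      ∃ q : ℝ → ℝ, ContDiffOn ℝ 2 q (Ioi 0) ∧ q 1 = 0 ∧ deriv q 1 = 0 ∧
        ∀ δ η : ℝ, 0 < δ → 0 < η →
          prad1 δ η = prad2 δ η + q η ∧
          ptan1 δ η = ptan2 δ η + q η - (3/2) * (η - δ) * deriv q η := by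
  obtain ⟨hr1, -, hiso1, -, h11_1, -, -, hη1, -, -⟩ := h1
  obtain ⟨hr2, -, hiso2, -, h11_2, -, -, hη2, -, -⟩ := h2
  have hd1 := hr1.differentiableOn two_ne_zero
  have hd2 := hr2.differentiableOn two_ne_zero
  have one_mem : (1 : ℝ) ∈ Ioi 0 := mem_Ioi.mpr one_pos
  constructor
  · rintro ⟨ha, hb⟩
    set q : ℝ → ℝ := fun η => prad1 1 η - prad2 1 η
    have hrad : ∀ δ η, 0 < δ → 0 < η → prad1 δ η = prad2 δ η + q η :=
      fun δ η hδ hη => eq_add_sub_of_ahat_eq hd1 hd2 ha hδ hη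
    have hqC : ContDiffOn ℝ 2 q (Ioi 0) := (hr1.slice_right one_mem).sub (hr2.slice_right one_mem)
    have hderiv : ∀ δ η, 0 < δ → 0 < η →
        deriv (fun e => prad1 δ e) η = deriv (fun e => prad2 δ e) η + deriv q η :=
      fun δ η hδ hη => deriv_slice_right_eq_add hd2 (hrad δ · hδ) hδ hη
        ((hqC.differentiableOn two_ne_zero).differentiableAt (isOpen_Ioi.mem_nhds hη))
    refine ⟨q, hqC, by simp [q, h11_1, h11_2], ?_, fun δ η hδ hη => ⟨hrad δ η hδ hη, ?_⟩⟩
    · linarith [hderiv 1 1 one_pos one_pos]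
    · rcases eq_or_ne η δ with rfl | hne
      · rw [← hiso1 η hη, ← hiso2 η hη, hrad η η hη hη]
        ring
      · exact (bhat_eq_bhat_iff hne (hrad δ η hδ hη) (hderiv δ η hδ hη)).mp (hb δ η hδ hη hne)
  · rintro ⟨q, hqC, -, -, hpq⟩
    have hrad : ∀ δ η, 0 < δ → 0 < η → prad1 δ η = prad2 δ η + q η :=
      fun δ η hδ hη => (hpq δ η hδ hη).1
    refine ⟨fun δ η hδ hη => ahat_eq_ahat_of_eq_add hrad hδ hη, fun δ η hδ hη hne => ?_⟩
    have hderiv := deriv_slice_right_eq_add hd2 (hrad δ · hδ) hδ hη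
      ((hqC.differentiableOn two_ne_zero).differentiableAt (isOpen_Ioi.mem_nhds hη))
    exact (bhat_eq_bhat_iff hne (hrad δ η hδ hη) hderiv).mpr (hpq δ η hδ hη).2

/-- Two elastic constitutive functions are dynamically equivalent iff they differ by a
`C²` function `q` of `η` with `q(1) = q'(1) = 0`, as in the displayed formulas. -/
theorem dynEquiv_iff_exists_q (κ ν : ℝ) (hκ : 0 < κ) (hν : ν ∈ Ioc (-1 : ℝ) (1/2))
    (prad1 ptan1 prad2 ptan2 : ℝ → ℝ → ℝ)
    (h1 : IsElasticConst κ ν prad1 ptan1) (h2 : IsElasticConst κ ν prad2 ptan2) :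
    DynEquiv prad1 ptan1 prad2 ptan2 ↔
      ∃ q : ℝ → ℝ, ContDiffOn ℝ 2 q (Ioi 0) ∧ q 1 = 0 ∧ deriv q 1 = 0 ∧
        ∀ δ η : ℝ, 0 < δ → 0 < η →
          prad1 δ η = prad2 δ η + q η ∧
          ptan1 δ η = ptan2 δ η + q η - (3/2) * (η - δ) * deriv q η :=
  dynEquiv_iff_exists_q_general κ ν prad1 ptan1 prad2 ptan2 h1 h2
end
end

section
/- Let (p̂_rad,p̂_tan) be a hyperelastic constitutive function for spherically symmetric bodies (with bulk modulus κ>0 and Poisson ratio ν∈(−1,1/2]) such that b̂(δ,η)=0 for all δ,η>0 with η≠δ. Then ∂_δp̂_rad(δ,η) is independent of η, i.e., ∂_δp̂_rad(δ,η₁)=∂_δp̂_rad(δ,η₂) for all δ,η₁,η₂>0; consequently (p̂_rad,p̂_tan) is dynamically equivalent to a fluid constitutive function. -/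
open Real Set Filter Topology

noncomputable section

/-- `w` is a stored energy function for `(p̂_rad, p̂_tan)`. -/
def IsStoredEnergy (w prad ptan : ℝ → ℝ → ℝ) : Prop :=
  ContDiffOn ℝ 3 (fun p : ℝ × ℝ => w p.1 p.2) (Ioi 0 ×ˢ Ioi 0) ∧
  w 1 1 = 0 ∧
  (∀ δ η : ℝ, 0 < δ → 0 < η → prad δ η = δ ^ 2 * deriv (fun d => w d η) δ) ∧
  (∀ δ η : ℝ, 0 < δ → 0 < η →
    ptan δ η = prad δ η + (3 / 2) * δ * η * deriv (fun e => w δ e) η)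

/-! Writing `P = p̂_rad = δ² ∂_δ w`, the hyperelastic relations turn `b̂ = 0` into
`δ η ∂_η w + (η - δ) ∂_η P = 0` off the diagonal, while symmetry of the second derivative of `w`
gives `∂_η P = δ² ∂_δ ∂_η w`. Differentiating the first identity in `δ` and eliminating
`∂_δ ∂_η w` with the second leaves `δ (η - δ) ∂_δ ∂_η P = 0`. So the mixed partial of `P`
vanishes off the diagonal, hence everywhere by continuity, and `∂_δ P` does not depend on `η`.
The fluid `δ ↦ p̂_rad(δ, 1)` then has the same `â`, and its `b̂` vanishes identically. -/

open Function

section PartialDeriv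

variable {E : Type*} [NormedAddCommGroup E] [NormedSpace ℝ E]

def partialFst (F : ℝ × ℝ → E) (x : ℝ × ℝ) : E := fderiv ℝ F x (1, 0)

def partialSnd (F : ℝ × ℝ → E) (x : ℝ × ℝ) : E := fderiv ℝ F x (0, 1)

variable {F : ℝ × ℝ → E} {x : ℝ × ℝ}

theorem DifferentiableAt.hasDerivAt_partialFst {a b : ℝ} (hF : DifferentiableAt ℝ F (a, b)) :
    HasDerivAt (fun t => F (t, b)) (partialFst F (a, b)) a :=
  hF.hasFDerivAt.comp_hasDerivAt a ((hasDerivAt_id a).prodMk (hasDerivAt_const a b))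

theorem DifferentiableAt.hasDerivAt_partialSnd {a b : ℝ} (hF : DifferentiableAt ℝ F (a, b)) :
    HasDerivAt (fun t => F (a, t)) (partialSnd F (a, b)) b :=
  hF.hasFDerivAt.comp_hasDerivAt b ((hasDerivAt_const b a).prodMk (hasDerivAt_id b))

theorem ContDiffAt.contDiffAt_partialFst {m n : WithTop ℕ∞} (hF : ContDiffAt ℝ n F x)
    (hmn : m + 1 ≤ n) :
    ContDiffAt ℝ m (partialFst F) x :=
  (hF.fderiv_right hmn).clm_apply contDiffAt_const

theorem ContDiffAt.contDiffAt_partialSnd {m n : WithTop ℕ∞} (hF : ContDiffAt ℝ n F x)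
    (hmn : m + 1 ≤ n) :
    ContDiffAt ℝ m (partialSnd F) x :=
  (hF.fderiv_right hmn).clm_apply contDiffAt_const

theorem ContDiffAt.partialFst_partialSnd (hF : ContDiffAt ℝ 2 F x) :
    partialFst (partialSnd F) x = partialSnd (partialFst F) x := by
  have hF' : DifferentiableAt ℝ (fderiv ℝ F) x :=
    (hF.fderiv_right (m := 1) le_rfl).differentiableAt one_ne_zero
  change fderiv ℝ (fun y => fderiv ℝ F y (0, 1)) x (1, 0) =
    fderiv ℝ (fun y => fderiv ℝ F y (1, 0)) x (0, 1)
  rw [fderiv_clm_apply hF' (differentiableAt_const _),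
    fderiv_clm_apply hF' (differentiableAt_const _)]
  simp only [fderiv_const_apply, ContinuousLinearMap.comp_zero, zero_add,
    ContinuousLinearMap.flip_apply]
  exact hF.isSymmSndFDerivAt (by simp) _ _

end PartialDeriv

theorem dense_setOf_snd_ne_fst : Dense {x : ℝ × ℝ | x.2 ≠ x.1} := by
  let sub : ℝ × ℝ →L[ℝ] ℝ := .snd ℝ ℝ ℝ - .fst ℝ ℝ ℝ
  have hsurj : Surjective sub := fun t => ⟨(0, t), by simp [sub]⟩
  have hset : {x : ℝ × ℝ | x.2 ≠ x.1} = sub ⁻¹' {0}ᶜ := by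
    ext x
    simp [sub, sub_eq_zero]
  rw [hset]
  exact (dense_compl_singleton 0).preimage (sub.isOpenMap hsurj)

theorem ContinuousOn.eq_zero_of_eq_zero_off_diag {E : Type*} [TopologicalSpace E] [T2Space E]
    [Zero E] {f : ℝ × ℝ → E} {s : Set (ℝ × ℝ)}
    (hf : ContinuousOn f s) (hs : IsOpen s) (h : ∀ x ∈ s, x.2 ≠ x.1 → f x = 0) :
    ∀ x ∈ s, f x = 0 :=
  Set.EqOn.of_subset_closure (fun x hx => h x hx.1 hx.2) hf continuousOn_const
    inter_subset_left (dense_setOf_snd_ne_fst.open_subset_closure_inter hs)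

theorem IsOpen.partialFst_eq_of_partialSnd_partialFst_eq_zero {F : ℝ × ℝ → ℝ} {s t : Set ℝ}
    (hs : IsOpen s) (ht : IsOpen t) (ht' : IsPreconnected t) (hF : ContDiffOn ℝ 2 F (s ×ˢ t))
    (h : ∀ x ∈ s ×ˢ t, partialSnd (partialFst F) x = 0) {a b₁ b₂ : ℝ} (ha : a ∈ s)
    (hb₁ : b₁ ∈ t) (hb₂ : b₂ ∈ t) : partialFst F (a, b₁) = partialFst F (a, b₂) := by
  have hst : IsOpen (s ×ˢ t) := hs.prod ht
  have hslice : ∀ b ∈ t, HasDerivAt (fun b => partialFst F (a, b)) 0 b := fun b hb => by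
    have hdiff : DifferentiableAt ℝ (partialFst F) (a, b) :=
      ((hF.contDiffAt (hst.mem_nhds ⟨ha, hb⟩)).contDiffAt_partialFst (m := 1) le_rfl
        ).differentiableAt one_ne_zero
    simpa [h (a, b) ⟨ha, hb⟩] using hdiff.hasDerivAt_partialSnd
  exact ht.is_const_of_deriv_eq_zero ht'
    (fun b hb => (hslice b hb).differentiableAt.differentiableWithinAt)
    (fun b hb => (hslice b hb).deriv) hb₁ hb₂

section StoredEnergy

variable {w prad ptan : ℝ → ℝ → ℝ} {δ η : ℝ}

theorem IsStoredEnergy.contDiffAt (hw : IsStoredEnergy w prad ptan) (hδ : 0 < δ)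
    (hη : 0 < η) : ContDiffAt ℝ 3 (uncurry w) (δ, η) :=
  hw.1.contDiffAt ((isOpen_Ioi.prod isOpen_Ioi).mem_nhds (mk_mem_prod hδ hη))

theorem IsStoredEnergy.differentiableAt (hw : IsStoredEnergy w prad ptan) (hδ : 0 < δ)
    (hη : 0 < η) : DifferentiableAt ℝ (uncurry w) (δ, η) :=
  (hw.contDiffAt hδ hη).differentiableAt (by norm_num)

theorem IsStoredEnergy.prad_eq (hw : IsStoredEnergy w prad ptan) (hδ : 0 < δ) (hη : 0 < η) :
    prad δ η = δ ^ 2 * partialFst (uncurry w) (δ, η) := by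
  have hderiv : deriv (fun d => w d η) δ = partialFst (uncurry w) (δ, η) :=
    (hw.differentiableAt hδ hη).hasDerivAt_partialFst.deriv
  rw [hw.2.2.1 δ η hδ hη, hderiv]

theorem IsStoredEnergy.ptan_sub_prad (hw : IsStoredEnergy w prad ptan) (hδ : 0 < δ)
    (hη : 0 < η) :
    ptan δ η - prad δ η = 3 / 2 * δ * η * partialSnd (uncurry w) (δ, η) := by
  have hderiv : deriv (fun e => w δ e) η = partialSnd (uncurry w) (δ, η) :=
    (hw.differentiableAt hδ hη).hasDerivAt_partialSnd.deriv
  rw [hw.2.2.2 δ η hδ hη, hderiv]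
  ring

theorem IsStoredEnergy.partialSnd_prad (hw : IsStoredEnergy w prad ptan)
    (hP : DifferentiableAt ℝ (uncurry prad) (δ, η)) (hδ : 0 < δ) (hη : 0 < η) :
    partialSnd (uncurry prad) (δ, η) =
      δ ^ 2 * partialFst (partialSnd (uncurry w)) (δ, η) := by
  have hW := hw.contDiffAt hδ hη
  have hprad : HasDerivAt (fun e => prad δ e) (partialSnd (uncurry prad) (δ, η)) η :=
    hP.hasDerivAt_partialSnd
  have hrhs : HasDerivAt (fun e => δ ^ 2 * partialFst (uncurry w) (δ, e))
      (δ ^ 2 * partialSnd (partialFst (uncurry w)) (δ, η)) η :=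
    (((hW.contDiffAt_partialFst (m := 2) (by norm_num)).differentiableAt
      two_ne_zero).hasDerivAt_partialSnd).const_mul _
  have heq : (fun e => prad δ e) =ᶠ[𝓝 η] fun e => δ ^ 2 * partialFst (uncurry w) (δ, e) := by
    filter_upwards [Ioi_mem_nhds hη] with e he using hw.prad_eq hδ he
  have hW2 : ContDiffAt ℝ 2 (uncurry w) (δ, η) := hW.of_le (by norm_num)
  rw [hprad.unique (hrhs.congr_of_eventuallyEq heq), hW2.partialFst_partialSnd]

theorem IsStoredEnergy.sub_mul_bhat (hw : IsStoredEnergy w prad ptan)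
    (hP : DifferentiableAt ℝ (uncurry prad) (δ, η)) (hδ : 0 < δ) (hη : 0 < η) (hne : η ≠ δ) :
    (η - δ) * bhat prad ptan δ η = 3 * (δ * η * partialSnd (uncurry w) (δ, η) +
      (η - δ) * partialSnd (uncurry prad) (δ, η)) := by
  have hderiv : deriv (fun e => prad δ e) η = partialSnd (uncurry prad) (δ, η) :=
    hP.hasDerivAt_partialSnd.deriv
  have hsub : η - δ ≠ 0 := sub_ne_zero.2 hne
  rw [bhat, hderiv, hw.ptan_sub_prad hδ hη]
  field_simp

theorem IsStoredEnergy.partialFst_partialSnd_prad_eq_zero (hw : IsStoredEnergy w prad ptan)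
    (hP : ContDiffOn ℝ 2 (uncurry prad) (Ioi 0 ×ˢ Ioi 0))
    (hb : ∀ δ η : ℝ, 0 < δ → 0 < η → η ≠ δ → bhat prad ptan δ η = 0)
    (hδ : 0 < δ) (hη : 0 < η) (hne : η ≠ δ) :
    partialFst (partialSnd (uncurry prad)) (δ, η) = 0 := by
  have hPat : ∀ {d e : ℝ}, 0 < d → 0 < e → ContDiffAt ℝ 2 (uncurry prad) (d, e) :=
    fun hd he => hP.contDiffAt ((isOpen_Ioi.prod isOpen_Ioi).mem_nhds (mk_mem_prod hd he))
  set W₂ := partialSnd (uncurry w)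
  set P₂ := partialSnd (uncurry prad)
  have hcrit : ∀ d, 0 < d → d ≠ η → d * η * W₂ (d, η) + (η - d) * P₂ (d, η) = 0 := by
    intro d hd hdη
    have h := hw.sub_mul_bhat ((hPat hd hη).differentiableAt two_ne_zero) hd hη hdη.symm
    rw [hb d η hd hη hdη.symm, mul_zero] at h
    linarith
  have hderiv : HasDerivAt (fun d => d * η * W₂ (d, η) + (η - d) * P₂ (d, η))
      (η * W₂ (δ, η) + δ * η * partialFst W₂ (δ, η) +
        (-P₂ (δ, η) + (η - δ) * partialFst P₂ (δ, η))) δ := by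
    have hW₂ : DifferentiableAt ℝ W₂ (δ, η) :=
      ((hw.contDiffAt hδ hη).contDiffAt_partialSnd (m := 2) (by norm_num)).differentiableAt
        two_ne_zero
    have hP₂ : DifferentiableAt ℝ P₂ (δ, η) :=
      ((hPat hδ hη).contDiffAt_partialSnd (m := 1) le_rfl).differentiableAt one_ne_zero
    refine ((((hasDerivAt_id' δ).mul_const η).mul hW₂.hasDerivAt_partialFst).add
      (((hasDerivAt_id' δ).const_sub η).mul hP₂.hasDerivAt_partialFst)).congr_deriv ?_
    ring
  have hconst : HasDerivAt (fun d => d * η * W₂ (d, η) + (η - d) * P₂ (d, η)) 0 δ := by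
    refine (hasDerivAt_const δ 0).congr_of_eventuallyEq ?_
    filter_upwards [Ioi_mem_nhds hδ, isOpen_ne.mem_nhds hne.symm] with d hd hdη
    exact hcrit d hd hdη
  have hdiag := hderiv.unique hconst
  have hmixed := hw.partialSnd_prad ((hPat hδ hη).differentiableAt two_ne_zero) hδ hη
  have hkey : δ * (η - δ) * partialFst P₂ (δ, η) = 0 := by
    linear_combination δ * hdiag + η * hmixed - hcrit δ hδ hne.symm
  exact (mul_eq_zero.1 hkey).resolve_left (mul_ne_zero hδ.ne' (sub_ne_zero.2 hne))

theorem IsStoredEnergy.partialSnd_partialFst_prad_eq_zero (hw : IsStoredEnergy w prad ptan)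
    (hP : ContDiffOn ℝ 2 (uncurry prad) (Ioi 0 ×ˢ Ioi 0))
    (hb : ∀ δ η : ℝ, 0 < δ → 0 < η → η ≠ δ → bhat prad ptan δ η = 0)
    {x : ℝ × ℝ} (hx : x ∈ Ioi 0 ×ˢ Ioi 0) :
    partialSnd (partialFst (uncurry prad)) x = 0 := by
  have hQ : IsOpen (Ioi (0 : ℝ) ×ˢ Ioi (0 : ℝ)) := isOpen_Ioi.prod isOpen_Ioi
  have hPat : ∀ y ∈ Ioi (0 : ℝ) ×ˢ Ioi (0 : ℝ), ContDiffAt ℝ 2 (uncurry prad) y :=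
    fun y hy => hP.contDiffAt (hQ.mem_nhds hy)
  rw [← (hPat x hx).partialFst_partialSnd]
  refine ContinuousOn.eq_zero_of_eq_zero_off_diag (fun y hy => ?_) hQ
    (fun y hy hne => hw.partialFst_partialSnd_prad_eq_zero hP hb hy.1 hy.2 hne) x hx
  exact (((hPat y hy).contDiffAt_partialSnd (m := 1) le_rfl).contDiffAt_partialFst (m := 0)
    (by norm_num)).continuousAt.continuousWithinAt

theorem IsStoredEnergy.ahat_eq_of_bhat_eq_zero (hw : IsStoredEnergy w prad ptan)
    (hP : ContDiffOn ℝ 2 (uncurry prad) (Ioi 0 ×ˢ Ioi 0))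
    (hb : ∀ δ η : ℝ, 0 < δ → 0 < η → η ≠ δ → bhat prad ptan δ η = 0)
    {η₁ η₂ : ℝ} (hδ : 0 < δ) (hη₁ : 0 < η₁) (hη₂ : 0 < η₂) :
    ahat prad δ η₁ = ahat prad δ η₂ := by
  have hahat : ∀ {η}, 0 < η → ahat prad δ η = partialFst (uncurry prad) (δ, η) := fun hη =>
    ((hP.contDiffAt ((isOpen_Ioi.prod isOpen_Ioi).mem_nhds (mk_mem_prod hδ hη))
      ).differentiableAt two_ne_zero).hasDerivAt_partialFst.deriv
  rw [hahat hη₁, hahat hη₂]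
  exact isOpen_Ioi.partialFst_eq_of_partialSnd_partialFst_eq_zero isOpen_Ioi isPreconnected_Ioi
    hP (fun x hx => hw.partialSnd_partialFst_prad_eq_zero hP hb hx) hδ hη₁ hη₂

end StoredEnergy

theorem isElasticConst_fluid {p : ℝ → ℝ} (hp : ContDiffOn ℝ 2 p (Ioi 0)) (h1 : p 1 = 0) :
    IsElasticConst (deriv p 1) (1 / 2) (fun δ _ => p δ) (fun δ _ => p δ) := by
  have hsmooth : ContDiffOn ℝ 2 (fun x : ℝ × ℝ => p x.1) (Ioi 0 ×ˢ Ioi 0) :=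
    hp.comp contDiffOn_fst fun x hx => hx.1
  refine ⟨hsmooth, hsmooth, fun _ _ => rfl, fun _ _ => ?_, h1, h1, ?_, ?_, ?_, ?_⟩ <;>
    simp only [deriv_const]
  all_goals ring

theorem bhat_fluid (p : ℝ → ℝ) (δ η : ℝ) : bhat (fun δ _ => p δ) (fun δ _ => p δ) δ η = 0 := by
  simp [bhat]

theorem bhat_zero_dynEquiv_fluid_general (κ ν : ℝ)
    (prad ptan : ℝ → ℝ → ℝ) (helastic : IsElasticConst κ ν prad ptan)
    (hhyper : ∃ w : ℝ → ℝ → ℝ, IsStoredEnergy w prad ptan)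
    (hb : ∀ δ η : ℝ, 0 < δ → 0 < η → η ≠ δ → bhat prad ptan δ η = 0) :
    (∀ δ η₁ η₂ : ℝ, 0 < δ → 0 < η₁ → 0 < η₂ → ahat prad δ η₁ = ahat prad δ η₂) ∧
    (∃ (κ' ν' : ℝ) (pfl : ℝ → ℝ),
      IsElasticConst κ' ν' (fun δ _ => pfl δ) (fun δ _ => pfl δ) ∧
      DynEquiv prad ptan (fun δ _ => pfl δ) (fun δ _ => pfl δ)) := by
  obtain ⟨w, hw⟩ := hhyper
  have hP : ContDiffOn ℝ 2 (uncurry prad) (Ioi 0 ×ˢ Ioi 0) := helastic.1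
  have hahat : ∀ δ η₁ η₂ : ℝ, 0 < δ → 0 < η₁ → 0 < η₂ → ahat prad δ η₁ = ahat prad δ η₂ :=
    fun _ _ _ hδ hη₁ hη₂ => hw.ahat_eq_of_bhat_eq_zero hP hb hδ hη₁ hη₂
  have hslice : ContDiffOn ℝ 2 (fun δ => prad δ 1) (Ioi 0) :=
    hP.comp (contDiffOn_id.prodMk contDiffOn_const) fun _ hδ => mk_mem_prod hδ (zero_lt_one' ℝ)
  refine ⟨hahat, _, _, fun δ => prad δ 1, isElasticConst_fluid hslice helastic.2.2.2.2.1,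
    fun δ η hδ hη => hahat δ η 1 hδ hη one_pos, fun δ η hδ hη hne => ?_⟩
  rw [hb δ η hδ hη hne, bhat_fluid]

/-- If a hyperelastic constitutive function has `b̂ ≡ 0` off the diagonal, then
`∂_δ p̂_rad` does not depend on `η`; consequently `(p̂_rad,p̂_tan)` is dynamically
equivalent to a fluid constitutive function. -/
theorem bhat_zero_dynEquiv_fluid (κ ν : ℝ) (hκ : 0 < κ) (hν : ν ∈ Ioc (-1 : ℝ) (1/2))
    (prad ptan : ℝ → ℝ → ℝ) (helastic : IsElasticConst κ ν prad ptan)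
    (hhyper : ∃ w : ℝ → ℝ → ℝ, IsStoredEnergy w prad ptan)
    (hb : ∀ δ η : ℝ, 0 < δ → 0 < η → η ≠ δ → bhat prad ptan δ η = 0) :
    (∀ δ η₁ η₂ : ℝ, 0 < δ → 0 < η₁ → 0 < η₂ → ahat prad δ η₁ = ahat prad δ η₂) ∧
    (∃ (κ' ν' : ℝ) (pfl : ℝ → ℝ),
      IsElasticConst κ' ν' (fun δ _ => pfl δ) (fun δ _ => pfl δ) ∧
      DynEquiv prad ptan (fun δ _ => pfl δ) (fun δ _ => pfl δ)) :=
  bhat_zero_dynEquiv_fluid_general κ ν prad ptan helastic hhyper hb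
end
end

section
/- Let (p̂_rad,p̂_tan) be a hyperelastic constitutive function for spherically symmetric bodies with stored energy ŵ. If the strong Baker–Ericksen inequality holds, i.e., (p̂_tan(δ,η)−p̂_rad(δ,η))/(η−δ) ≥ 0 for all δ,η>0 with η≠δ, then ŵ(δ,η) ≥ ŵ(δ,δ) for all δ,η>0. If only the weak Baker–Ericksen inequality holds, i.e., (p̂_tan(δ,η)−p̂_rad(δ,η))/(η−δ) ≥ 0 for all η>δ>0, then ŵ(δ,η) ≥ ŵ(δ,δ) for all η ≥ δ > 0. -/
/-!
Since `p̂_tan - p̂_rad = (3/2) δ η ∂_η ŵ`, the Baker–Ericksen inequality says exactly that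
`∂_η ŵ(δ, η)` has the sign of `η - δ`. Hence `η ↦ ŵ(δ, η)` decreases up to `η = δ` and increases
after it, so it is minimal at `η = δ`.
-/

open Real Set Filter Topology

noncomputable section

theorem DifferentiableOn.apply_of_uncurry {𝕜 E F G : Type*} [NontriviallyNormedField 𝕜]
    [NormedAddCommGroup E] [NormedSpace 𝕜 E] [NormedAddCommGroup F] [NormedSpace 𝕜 F]
    [NormedAddCommGroup G] [NormedSpace 𝕜 G] {f : E → F → G} {s : Set E} {t : Set F}
    (hf : DifferentiableOn 𝕜 (Function.uncurry f) (s ×ˢ t)) {a : E} (ha : a ∈ s) :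
    DifferentiableOn 𝕜 (f a) t :=
  hf.comp ((differentiable_const a).prodMk differentiable_id).differentiableOn
    fun _ hy => ⟨ha, hy⟩

theorem le_of_mul_deriv_nonneg {f : ℝ → ℝ} {c y : ℝ} (hf : DifferentiableOn ℝ f (uIcc c y))
    (hsign : ∀ x ∈ uIcc c y, x ≠ c → 0 ≤ (x - c) * deriv f x) : f c ≤ f y := by
  rcases le_total c y with hcy | hyc
  · rw [uIcc_of_le hcy] at hf hsign
    have hmono : MonotoneOn f (Icc c y) := by
      refine monotoneOn_of_deriv_nonneg (convex_Icc c y) hf.continuousOn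
        (hf.mono interior_subset) fun x hx => ?_
      rw [interior_Icc] at hx
      exact nonneg_of_mul_nonneg_right
        (by simpa [mul_comm] using hsign x (Ioo_subset_Icc_self hx) hx.1.ne') (sub_pos.2 hx.1)
    exact hmono (left_mem_Icc.2 hcy) (right_mem_Icc.2 hcy) hcy
  · rw [uIcc_of_ge hyc] at hf hsign
    have hanti : AntitoneOn f (Icc y c) := by
      refine antitoneOn_of_deriv_nonpos (convex_Icc y c) hf.continuousOn
        (hf.mono interior_subset) fun x hx => ?_
      rw [interior_Icc] at hx
      exact nonpos_of_mul_nonneg_right (hsign x (Ioo_subset_Icc_self hx) hx.2.ne)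
        (sub_neg.2 hx.2)
    exact hanti (left_mem_Icc.2 hyc) (right_mem_Icc.2 hyc) hyc

namespace IsStoredEnergy

variable {w prad ptan : ℝ → ℝ → ℝ}

theorem differentiableOn (hw : IsStoredEnergy w prad ptan) {δ : ℝ} (hδ : 0 < δ) :
    DifferentiableOn ℝ (w δ) (Ioi 0) :=
  (hw.1.differentiableOn (by norm_num)).apply_of_uncurry (f := w) hδ

theorem mul_deriv_nonneg_of_bakerEricksen (hw : IsStoredEnergy w prad ptan) {δ η : ℝ}
    (hδ : 0 < δ) (hη : 0 < η) (hne : η ≠ δ)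
    (hBE : 0 ≤ (ptan δ η - prad δ η) / (η - δ)) : 0 ≤ (η - δ) * deriv (w δ) η := by
  have htan : ptan δ η - prad δ η = (3 / 2) * δ * η * deriv (w δ) η := by
    rw [hw.2.2.2 δ η hδ hη]; ring
  have hsq : (ptan δ η - prad δ η) / (η - δ) * (η - δ) ^ 2
      = (3 / 2) * δ * η * ((η - δ) * deriv (w δ) η) := by
    rw [htan]; field_simp [sub_ne_zero.2 hne]
  exact nonneg_of_mul_nonneg_right (hsq ▸ mul_nonneg hBE (sq_nonneg _)) (by positivity)

end IsStoredEnergy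

theorem storedEnergy_ge_of_BakerEricksen_general (prad ptan w : ℝ → ℝ → ℝ)
    (hw : IsStoredEnergy w prad ptan) :
    ((∀ δ η : ℝ, 0 < δ → 0 < η → η ≠ δ →
        0 ≤ (ptan δ η - prad δ η) / (η - δ)) →
      ∀ δ η : ℝ, 0 < δ → 0 < η → w δ δ ≤ w δ η) ∧
    ((∀ δ η : ℝ, 0 < δ → δ < η →
        0 ≤ (ptan δ η - prad δ η) / (η - δ)) →
      ∀ δ η : ℝ, 0 < δ → δ ≤ η → w δ δ ≤ w δ η) := by
  have hmin : ∀ δ η : ℝ, 0 < δ → 0 < η →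
      (∀ x ∈ uIcc δ η, 0 < x → x ≠ δ → 0 ≤ (ptan δ x - prad δ x) / (x - δ)) →
      w δ δ ≤ w δ η := by
    intro δ η hδ hη hBE
    have hpos : uIcc δ η ⊆ Ioi 0 := fun x hx => lt_of_lt_of_le (lt_min hδ hη) hx.1
    exact le_of_mul_deriv_nonneg ((hw.differentiableOn hδ).mono hpos) fun x hx hxδ =>
      hw.mul_deriv_nonneg_of_bakerEricksen hδ (hpos hx) hxδ (hBE x hx (hpos hx) hxδ)
  refine ⟨fun hBE δ η hδ hη => hmin δ η hδ hη fun x _ hx hxδ => hBE δ x hδ hx hxδ,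
    fun hBE δ η hδ hδη => hmin δ η hδ (hδ.trans_le hδη) fun x hx _ hxδ => ?_⟩
  rw [uIcc_of_le hδη] at hx
  exact hBE δ x hδ (lt_of_le_of_ne hx.1 (Ne.symm hxδ))

/-- Under the strong Baker–Ericksen inequality the stored energy satisfies
`ŵ(δ,η) ≥ ŵ(δ,δ)` on all of `(0,∞)²`; under the weak Baker–Ericksen inequality it
satisfies `ŵ(δ,η) ≥ ŵ(δ,δ)` for all `η ≥ δ > 0`. -/
theorem storedEnergy_ge_of_BakerEricksen (κ ν : ℝ) (hκ : 0 < κ)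
    (hν : ν ∈ Ioc (-1 : ℝ) (1/2)) (prad ptan w : ℝ → ℝ → ℝ)
    (helastic : IsElasticConst κ ν prad ptan)
    (hw : IsStoredEnergy w prad ptan) :
    ((∀ δ η : ℝ, 0 < δ → 0 < η → η ≠ δ →
        0 ≤ (ptan δ η - prad δ η) / (η - δ)) →
      ∀ δ η : ℝ, 0 < δ → 0 < η → w δ δ ≤ w δ η) ∧
    ((∀ δ η : ℝ, 0 < δ → δ < η →
        0 ≤ (ptan δ η - prad δ η) / (η - δ)) →
      ∀ δ η : ℝ, 0 < δ → δ ≤ η → w δ δ ≤ w δ η) :=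
  storedEnergy_ge_of_BakerEricksen_general prad ptan w hw
end
end

section
/- Let (p̂_rad,p̂_tan) be an elastic constitutive function for spherically symmetric bodies with â(δ,δ)>0 for all δ>0, let G,K>0, and let δ (with associated η) be a regular solution of the static system on [0,R). Then η(r)>δ(r) and η'(r)<0 for all r∈(0,R). -/
/-! With `f = δ - η`, the definition of `η` gives `η' = 3 f / r`, hence `f' = δ' - 3 f / r`, and
`f → 0` at the centre. At a zero of `f` the static equation reduces to
`â(δ,δ) δ' = -(4πG/3) K² r δ² < 0`, so `f` can only cross zero downwards. Near the centre,
`(δ, η)` is close to the diagonal point `(δ(0), δ(0))`; by (i) the numerator of the static equation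
vanishes on the diagonal together with its `η`-derivative, so it is `o(δ - η)` there, and the
equation forces `f' < 0` wherever `f ≥ 0`. Hence `f < 0` near `0`, and then on all of `(0, R)`. -/

open Real Set Filter Topology

noncomputable section

/-- A regular solution of the static system on `[0,R)`: `δ ∈ C⁰([0,R)) ∩ C¹((0,R))`,
positive, with `η(r) = (3/r³)∫₀ʳ δ(s)s² ds` for `r ∈ (0,R)`, `η(0) = δ(0)`, and the
static equation `â(δ,η)δ' = [2(p̂_tan − p̂_rad) + 3(η−δ)∂_η p̂_rad]/r − (4πG/3)K²rηδ`. -/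
def IsRegularStatic (prad ptan : ℝ → ℝ → ℝ) (G K R : ℝ) (δ η : ℝ → ℝ) : Prop :=
  ContinuousOn δ (Ico 0 R) ∧
  (∀ r ∈ Ioo 0 R, DifferentiableAt ℝ δ r) ∧
  ContinuousOn (deriv δ) (Ioo 0 R) ∧
  (∀ r ∈ Ico 0 R, 0 < δ r) ∧
  η 0 = δ 0 ∧
  (∀ r ∈ Ioo 0 R, η r = 3 / r ^ 3 * ∫ s in (0:ℝ)..r, δ s * s ^ 2) ∧
  (∀ r ∈ Ioo 0 R,
    ahat prad (δ r) (η r) * deriv δ r =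
      (2 * (ptan (δ r) (η r) - prad (δ r) (η r))
        + 3 * (η r - δ r) * deriv (fun e => prad (δ r) e) (η r)) / r
      - (4 * π * G / 3) * K ^ 2 * r * η r * δ r)

lemma neg_of_nonpos_of_deriv_neg_of_eq_zero {f f' : ℝ → ℝ} {s w : ℝ} (hsw : s < w)
    (hf : ∀ x ∈ Icc s w, HasDerivAt f (f' x) x) (hzero : ∀ x ∈ Icc s w, f x = 0 → f' x < 0)
    (hs : f s ≤ 0) : f w < 0 := by
  have hle : ∀ x ∈ Icc s w, f x ≤ 0 :=
    image_le_of_deriv_right_lt_deriv_boundary' (B := 0) (B' := 0)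
      (fun x hx => (hf x hx).continuousAt.continuousWithinAt)
      (fun x hx => (hf x (Ico_subset_Icc_self hx)).hasDerivWithinAt) hs continuousOn_const
      (fun x _ => hasDerivWithinAt_const x _ 0)
      (fun x hx => hzero x (Ico_subset_Icc_self hx))
  refine (hle w (right_mem_Icc.2 hsw.le)).lt_of_ne fun hw => ?_
  have hsign := eventually_nhdsWithin_sign_eq_of_deriv_neg
    ((hf w (right_mem_Icc.2 hsw.le)).deriv ▸ hzero w (right_mem_Icc.2 hsw.le) hw) hw
  obtain ⟨x, hx, hxsw⟩ :=
    ((hsign.filter_mono nhdsWithin_le_nhds).and (Ioo_mem_nhdsLT hsw)).exists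
  have hpos : 0 < f x := by
    rwa [sign_pos (sub_pos.2 hxsw.2), sign_eq_one_iff] at hx
  exact (hle x (Ioo_subset_Icc_self hxsw)).not_gt hpos

lemma neg_of_tendsto_nhdsGT_zero {f f' : ℝ → ℝ} {b : ℝ}
    (hf : ∀ x ∈ Ioo 0 b, HasDerivAt f (f' x) x) (hlim : Tendsto f (𝓝[>] 0) (𝓝 0))
    (hzero : ∀ x ∈ Ioo 0 b, f x = 0 → f' x < 0)
    (hnear : ∀ᶠ x in 𝓝[>] 0, 0 ≤ f x → f' x < 0) :
    ∀ x ∈ Ioo 0 b, f x < 0 := by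
  have crossing : ∀ u ∈ Ioo 0 b, ∀ x ∈ Ioo 0 b, u < x → f u ≤ 0 → f x < 0 :=
    fun u hu x hx hux hfu => neg_of_nonpos_of_deriv_neg_of_eq_zero hux
      (fun y hy => hf y ⟨hu.1.trans_le hy.1, hy.2.trans_lt hx.2⟩)
      (fun y hy => hzero y ⟨hu.1.trans_le hy.1, hy.2.trans_lt hx.2⟩) hfu
  obtain ⟨ε, hε, hεnear⟩ := (nhdsGT_basis (0 : ℝ)).eventually_iff.1 hnear
  -- Near `0`, a point with `f ≥ 0` would force `f > 0` and hence `f` decreasing on `(0, x)`,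
  -- which is incompatible with `f → 0`.
  have hsmall : ∀ x ∈ Ioo 0 b, x < ε → f x < 0 := by
    intro x hx hxε
    by_contra! hfx
    have hpos : ∀ u ∈ Ioo 0 x, 0 < f u := fun u hu => by
      by_contra! hfu
      exact (crossing u ⟨hu.1, hu.2.trans hx.2⟩ x hx hu.2 hfu).not_ge hfx
    have hanti : StrictAntiOn f (Ioo 0 x) := by
      refine strictAntiOn_of_hasDerivWithinAt_neg (convex_Ioo 0 x) (f' := f')
        (fun u hu => (hf u ⟨hu.1, hu.2.trans hx.2⟩).continuousAt.continuousWithinAt)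
        (fun u hu => ?_) (fun u hu => ?_) <;> rw [interior_Ioo] at hu
      · exact (hf u ⟨hu.1, hu.2.trans hx.2⟩).hasDerivWithinAt
      · exact hεnear ⟨hu.1, hu.2.trans hxε⟩ (hpos u hu).le
    have hhalf : x / 2 ∈ Ioo 0 x := ⟨by linarith [hx.1], by linarith [hx.1]⟩
    have hle : f (x / 2) ≤ 0 := by
      refine ge_of_tendsto hlim ?_
      filter_upwards [Ioo_mem_nhdsGT hhalf.1] with u hu
      exact (hanti ⟨hu.1, hu.2.trans hhalf.2⟩ hhalf hu.2).le
    exact (hpos _ hhalf).not_ge hle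
  intro x hx
  have hu : min x (ε / 2) ∈ Ioo 0 b :=
    ⟨lt_min hx.1 (half_pos hε), (min_le_left _ _).trans_lt hx.2⟩
  have hfu : f (min x (ε / 2)) < 0 :=
    hsmall _ hu ((min_le_right _ _).trans_lt (half_lt_self hε))
  rcases (min_le_left x (ε / 2)).eq_or_lt with h | h
  · rwa [h] at hfu
  · exact crossing _ hu x hx h hfu.le

lemma tendsto_nhdsGT_of_continuousOn_Ico {g : ℝ → ℝ} {a b : ℝ} (hg : ContinuousOn g (Ico a b))
    (hab : a < b) : Tendsto g (𝓝[>] a) (𝓝 (g a)) :=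
  (hg a (left_mem_Ico.2 hab)).mono_of_mem_nhdsWithin
    (mem_of_superset (Ioo_mem_nhdsGT hab) Ioo_subset_Ico_self)

/-- The mean value of the radial function `g` over the ball of radius `r` in `ℝ³`. -/
def ballMean (g : ℝ → ℝ) (r : ℝ) : ℝ := 3 / r ^ 3 * ∫ s in (0 : ℝ)..r, g s * s ^ 2

section ballMean

variable {g : ℝ → ℝ} {R r : ℝ}

lemma intervalIntegrable_mul_sq (hg : ContinuousOn g (Ico 0 R)) (hr : r ∈ Ico 0 R) :
    IntervalIntegrable (fun s => g s * s ^ 2) MeasureTheory.volume 0 r := by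
  refine ContinuousOn.intervalIntegrable ((hg.mono ?_).mul (continuousOn_pow 2))
  rw [uIcc_of_le hr.1]
  exact Icc_subset_Ico_right hr.2

lemma hasDerivAt_integral_mul_sq (hg : ContinuousOn g (Ico 0 R)) (hr : r ∈ Ioo 0 R) :
    HasDerivAt (fun u => ∫ s in (0 : ℝ)..u, g s * s ^ 2) (g r * r ^ 2) r := by
  have hcont : ∀ x ∈ Ioo 0 R, ContinuousAt (fun s => g s * s ^ 2) x := fun x hx =>
    (hg.continuousAt (Ico_mem_nhds hx.1 hx.2)).mul (continuous_pow 2).continuousAt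
  exact intervalIntegral.integral_hasDerivAt_right
    (intervalIntegrable_mul_sq hg (Ioo_subset_Ico_self hr))
    (ContinuousAt.stronglyMeasurableAtFilter isOpen_Ioo hcont r hr) (hcont r hr)

lemma hasDerivAt_ballMean (hg : ContinuousOn g (Ico 0 R)) (hr : r ∈ Ioo 0 R) :
    HasDerivAt (ballMean g) (3 * (g r - ballMean g r) / r) r := by
  have hr0 : r ≠ 0 := hr.1.ne'
  have hcube : HasDerivAt (fun u : ℝ => 3 / u ^ 3) (-(3 * (3 * r ^ 2)) / (r ^ 3) ^ 2) r := by
    simpa using (hasDerivAt_const r (3 : ℝ)).fun_div (hasDerivAt_pow 3 r) (pow_ne_zero 3 hr0)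
  refine (hcube.mul (hasDerivAt_integral_mul_sq hg hr)).congr_deriv ?_
  simp only [ballMean]
  field_simp
  ring

lemma ballMean_pos (hg : ContinuousOn g (Ico 0 R)) (hpos : ∀ s ∈ Ico 0 R, 0 < g s)
    (hr : r ∈ Ioo 0 R) : 0 < ballMean g r := by
  have hr0 := hr.1
  have hint : 0 < ∫ s in (0 : ℝ)..r, g s * s ^ 2 :=
    intervalIntegral.intervalIntegral_pos_of_pos_on
      (intervalIntegrable_mul_sq hg (Ioo_subset_Ico_self hr))
      (fun s hs => mul_pos (hpos s ⟨hs.1.le, hs.2.trans hr.2⟩) (pow_pos hs.1 2)) hr0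
  unfold ballMean
  positivity

lemma tendsto_ballMean (hg : ContinuousOn g (Ico 0 R)) (hR : 0 < R) :
    Tendsto (ballMean g) (𝓝[>] 0) (𝓝 (g 0)) := by
  have hmean : ballMean g = fun x => (∫ s in (0 : ℝ)..x, g s * s ^ 2) / (x ^ 3 / 3) := by
    ext x
    simp only [ballMean]
    ring
  have hhalf : R / 2 ∈ Ioo 0 R := ⟨half_pos hR, half_lt_self hR⟩
  have hprim : Tendsto (fun x => ∫ s in (0 : ℝ)..x, g s * s ^ 2) (𝓝[>] 0) (𝓝 0) := by
    have h := intervalIntegral.continuousOn_primitive_interval'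
      (intervalIntegrable_mul_sq hg (Ioo_subset_Ico_self hhalf)) left_mem_uIcc
    rw [uIcc_of_le hhalf.1.le] at h
    simpa using ((h 0 (left_mem_Icc.2 hhalf.1.le)).mono_of_mem_nhdsWithin
      (mem_of_superset (Ioo_mem_nhdsGT hhalf.1) Ioo_subset_Icc_self)).tendsto
  have hcube : Tendsto (fun x : ℝ => x ^ 3 / 3) (𝓝[>] 0) (𝓝 0) := by
    simpa using
      (((continuous_pow 3).div_const (3 : ℝ)).tendsto (0 : ℝ)).mono_left nhdsWithin_le_nhds
  have hratio : Tendsto (fun x => g x * x ^ 2 / x ^ 2) (𝓝[>] 0) (𝓝 (g 0)) := by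
    refine (tendsto_nhdsGT_of_continuousOn_Ico hg hR).congr' ?_
    filter_upwards [self_mem_nhdsWithin] with x hx
    field_simp [(mem_Ioi.1 hx).ne']
  rw [hmean]
  refine HasDerivAt.lhopital_zero_right_on_Ioo hR (fun x hx => hasDerivAt_integral_mul_sq hg hx)
    (fun x _ => ?_) (fun x hx => (pow_pos hx.1 2).ne') hprim hcube hratio
  simpa using (hasDerivAt_pow 3 x).div_const 3

end ballMean

section PartialDerivatives

variable {f : ℝ → ℝ → ℝ} {s : Set (ℝ × ℝ)} {d e : ℝ}

lemma hasDerivAt_left_of_differentiableAt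
    (h : DifferentiableAt ℝ (fun q : ℝ × ℝ => f q.1 q.2) (d, e)) :
    HasDerivAt (fun d' => f d' e) (fderiv ℝ (fun q : ℝ × ℝ => f q.1 q.2) (d, e) (1, 0)) d := by
  simpa [Function.comp_def] using
    h.hasFDerivAt.comp_hasDerivAt d ((hasDerivAt_id d).prodMk (hasDerivAt_const d e))

lemma hasDerivAt_right_of_differentiableAt
    (h : DifferentiableAt ℝ (fun q : ℝ × ℝ => f q.1 q.2) (d, e)) :
    HasDerivAt (fun e' => f d e') (fderiv ℝ (fun q : ℝ × ℝ => f q.1 q.2) (d, e) (0, 1)) e := by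
  simpa [Function.comp_def] using
    h.hasFDerivAt.comp_hasDerivAt e ((hasDerivAt_const e d).prodMk (hasDerivAt_id e))

variable {m n : WithTop ℕ∞}

lemma contDiffOn_deriv_left (hf : ContDiffOn ℝ n (fun q : ℝ × ℝ => f q.1 q.2) s)
    (hs : IsOpen s) (hmn : m + 1 ≤ n) :
    ContDiffOn ℝ m (fun q : ℝ × ℝ => deriv (fun d => f d q.2) q.1) s := by
  have hn : n ≠ 0 := ENat.one_le_iff_ne_zero_withTop.1 (le_add_self.trans hmn)
  exact ((hf.fderiv_of_isOpen hs hmn).clm_apply contDiffOn_const).congr fun q hq =>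
    (hasDerivAt_left_of_differentiableAt
      ((hf.contDiffAt (hs.mem_nhds hq)).differentiableAt hn)).deriv

lemma contDiffOn_deriv_right (hf : ContDiffOn ℝ n (fun q : ℝ × ℝ => f q.1 q.2) s)
    (hs : IsOpen s) (hmn : m + 1 ≤ n) :
    ContDiffOn ℝ m (fun q : ℝ × ℝ => deriv (fun e => f q.1 e) q.2) s := by
  have hn : n ≠ 0 := ENat.one_le_iff_ne_zero_withTop.1 (le_add_self.trans hmn)
  exact ((hf.fderiv_of_isOpen hs hmn).clm_apply contDiffOn_const).congr fun q hq =>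
    (hasDerivAt_right_of_differentiableAt
      ((hf.contDiffAt (hs.mem_nhds hq)).differentiableAt hn)).deriv

end PartialDerivatives

lemma HasStrictFDerivAt.isLittleO_fst_sub_snd {Φ : ℝ × ℝ → ℝ} {L : ℝ × ℝ →L[ℝ] ℝ} {d : ℝ}
    (hΦ : HasStrictFDerivAt Φ L (d, d)) (hL : L (0, 1) = 0)
    (hdiag : ∀ᶠ q in 𝓝 (d, d), Φ (q.1, q.1) = 0) :
    Φ =o[𝓝 (d, d)] fun q => q.1 - q.2 := by
  have hk : Tendsto (fun q : ℝ × ℝ => (q, (q.1, q.1))) (𝓝 (d, d)) (𝓝 ((d, d), (d, d))) :=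
    ((continuous_id.prodMk (continuous_fst.prodMk continuous_fst)).tendsto (d, d))
  have hvert : ∀ q : ℝ × ℝ, q - (q.1, q.1) = (q.2 - q.1) • ((0 : ℝ), (1 : ℝ)) := fun q => by
    ext <;> simp
  refine ((hΦ.isLittleO.comp_tendsto hk).trans_isBigO ?_).congr' ?_ EventuallyEq.rfl
  · refine Asymptotics.IsBigO.of_bound 1 (Eventually.of_forall fun q => ?_)
    simp [hvert, abs_sub_comm]
  · filter_upwards [hdiag] with q hq
    change Φ q - Φ (q.1, q.1) - L (q - (q.1, q.1)) = Φ q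
    rw [hq, hvert, map_smul, hL, smul_zero, sub_zero, sub_zero]

/-- The numerator of the first term on the right of the static equation. -/
def anisotropicStress (prad ptan : ℝ → ℝ → ℝ) (d e : ℝ) : ℝ :=
  2 * (ptan d e - prad d e) + 3 * (e - d) * deriv (fun e' => prad d e') e

section anisotropicStress

variable {prad ptan : ℝ → ℝ → ℝ} {s : Set (ℝ × ℝ)} {d : ℝ}

lemma anisotropicStress_self (h : prad d d = ptan d d) : anisotropicStress prad ptan d d = 0 := by
  simp [anisotropicStress, h]

lemma contDiffOn_anisotropicStress (hP : ContDiffOn ℝ 2 (fun q : ℝ × ℝ => prad q.1 q.2) s)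
    (hQ : ContDiffOn ℝ 1 (fun q : ℝ × ℝ => ptan q.1 q.2) s) (hs : IsOpen s) :
    ContDiffOn ℝ 1 (fun q : ℝ × ℝ => anisotropicStress prad ptan q.1 q.2) s :=
  (contDiffOn_const.mul (hQ.sub (hP.of_le one_le_two))).add
    ((contDiffOn_const.mul (contDiffOn_snd.sub contDiffOn_fst)).mul
      (contDiffOn_deriv_right hP hs one_add_one_eq_two.le))

lemma hasDerivAt_anisotropicStress_right_self
    (hP : ContDiffOn ℝ 2 (fun q : ℝ × ℝ => prad q.1 q.2) s)
    (hQ : ContDiffOn ℝ 1 (fun q : ℝ × ℝ => ptan q.1 q.2) s) (hs : IsOpen s) (hd : (d, d) ∈ s)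
    (hsum : deriv (fun e => prad d e + 2 * ptan d e) d = 0) :
    HasDerivAt (fun e => anisotropicStress prad ptan d e) 0 d := by
  have hP' := hasDerivAt_right_of_differentiableAt
    ((hP.contDiffAt (hs.mem_nhds hd)).differentiableAt two_ne_zero)
  have hQ' := hasDerivAt_right_of_differentiableAt
    ((hQ.contDiffAt (hs.mem_nhds hd)).differentiableAt one_ne_zero)
  have hP'' := hasDerivAt_right_of_differentiableAt
    (f := fun d e => deriv (fun e' => prad d e') e)
    (((contDiffOn_deriv_right hP hs one_add_one_eq_two.le).contDiffAt
      (hs.mem_nhds hd)).differentiableAt one_ne_zero)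
  refine (((hQ'.sub hP').const_mul 2).add
    ((((hasDerivAt_id d).sub_const d).const_mul 3).mul hP'')).congr_deriv ?_
  rw [(hP'.fun_add (hQ'.const_mul 2)).deriv] at hsum
  rw [hP'.deriv, id, sub_self, mul_zero, zero_mul, add_zero]
  linarith

end anisotropicStress

lemma IsElasticConst.eventually_abs_anisotropicStress_le {κ ν : ℝ} {prad ptan : ℝ → ℝ → ℝ}
    (helastic : IsElasticConst κ ν prad ptan) {d : ℝ} (hd : 0 < d) (ha : 0 < ahat prad d d) :
    ∀ᶠ q in 𝓝 (d, d), 0 < ahat prad q.1 q.2 ∧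
      |anisotropicStress prad ptan q.1 q.2| ≤ ahat prad q.1 q.2 * |q.1 - q.2| := by
  obtain ⟨hP, hQ, hdiag, hsum, -⟩ := helastic
  have hΩ : IsOpen (Ioi (0 : ℝ) ×ˢ Ioi (0 : ℝ)) := isOpen_Ioi.prod isOpen_Ioi
  have hnhds := hΩ.mem_nhds (show (d, d) ∈ Ioi (0 : ℝ) ×ˢ Ioi (0 : ℝ) from ⟨hd, hd⟩)
  have hstrict := ((contDiffOn_anisotropicStress hP (hQ.of_le one_le_two) hΩ).contDiffAt
    hnhds).hasStrictFDerivAt one_ne_zero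
  have hL := (hasDerivAt_right_of_differentiableAt hstrict.differentiableAt).unique
    (hasDerivAt_anisotropicStress_right_self hP (hQ.of_le one_le_two) hΩ ⟨hd, hd⟩ (hsum d hd))
  have hsmall := (hstrict.isLittleO_fst_sub_snd hL (by
    filter_upwards [hnhds] with q hq
    exact anisotropicStress_self (hdiag q.1 hq.1))).bound (half_pos ha)
  have hcont : ContinuousAt (fun q : ℝ × ℝ => ahat prad q.1 q.2) (d, d) :=
    (contDiffOn_deriv_left hP hΩ (m := 0) (by norm_num)).continuousOn.continuousAt hnhds
  filter_upwards [hcont.eventually (lt_mem_nhds (half_lt_self ha)), hsmall] with q hqa hqF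
  rw [Real.norm_eq_abs, Real.norm_eq_abs] at hqF
  exact ⟨(half_pos ha).trans hqa, hqF.trans (mul_le_mul_of_nonneg_right hqa.le (abs_nonneg _))⟩

namespace IsRegularStatic

variable {prad ptan : ℝ → ℝ → ℝ} {G K R r : ℝ} {δ η : ℝ → ℝ}

lemma delta_pos (h : IsRegularStatic prad ptan G K R δ η) (hr : r ∈ Ico 0 R) : 0 < δ r :=
  h.2.2.2.1 r hr

lemma eqOn_ballMean (h : IsRegularStatic prad ptan G K R δ η) :
    EqOn η (ballMean δ) (Ioo 0 R) :=
  h.2.2.2.2.2.1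

lemma hasDerivAt_eta (h : IsRegularStatic prad ptan G K R δ η) (hr : r ∈ Ioo 0 R) :
    HasDerivAt η (3 * (δ r - η r) / r) r := by
  rw [h.eqOn_ballMean hr]
  exact (hasDerivAt_ballMean h.1 hr).congr_of_eventuallyEq
    (h.eqOn_ballMean.eventuallyEq_of_mem (isOpen_Ioo.mem_nhds hr))

lemma eta_pos (h : IsRegularStatic prad ptan G K R δ η) (hr : r ∈ Ioo 0 R) : 0 < η r :=
  h.eqOn_ballMean hr ▸ ballMean_pos h.1 h.2.2.2.1 hr

lemma tendsto_delta (h : IsRegularStatic prad ptan G K R δ η) (hR : 0 < R) :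
    Tendsto δ (𝓝[>] 0) (𝓝 (δ 0)) :=
  tendsto_nhdsGT_of_continuousOn_Ico h.1 hR

lemma tendsto_eta (h : IsRegularStatic prad ptan G K R δ η) (hR : 0 < R) :
    Tendsto η (𝓝[>] 0) (𝓝 (δ 0)) :=
  (tendsto_ballMean h.1 hR).congr'
    (h.eqOn_ballMean.symm.eventuallyEq_of_mem (Ioo_mem_nhdsGT hR))

lemma hasDerivAt_delta_sub_eta (h : IsRegularStatic prad ptan G K R δ η) (hr : r ∈ Ioo 0 R) :
    HasDerivAt (fun u => δ u - η u) (deriv δ r - 3 * (δ r - η r) / r) r :=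
  (h.2.1 r hr).hasDerivAt.sub (h.hasDerivAt_eta hr)

lemma ahat_mul_deriv_eq (h : IsRegularStatic prad ptan G K R δ η) (hr : r ∈ Ioo 0 R) :
    ahat prad (δ r) (η r) * deriv δ r =
      anisotropicStress prad ptan (δ r) (η r) / r - 4 * π * G / 3 * K ^ 2 * r * η r * δ r :=
  h.2.2.2.2.2.2 r hr

lemma deriv_delta_sub_eta_neg_of_eq (h : IsRegularStatic prad ptan G K R δ η)
    (hG : 0 < G) (hK : 0 < K)
    (hdiag : ∀ d : ℝ, 0 < d → prad d d = ptan d d) (ha : ∀ d : ℝ, 0 < d → 0 < ahat prad d d)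
    (hr : r ∈ Ioo 0 R) (heq : δ r = η r) : deriv δ r - 3 * (δ r - η r) / r < 0 := by
  have hδ := h.delta_pos (Ioo_subset_Ico_self hr)
  have hr0 := hr.1
  have hstatic := h.ahat_mul_deriv_eq hr
  rw [← heq, anisotropicStress_self (hdiag _ hδ), zero_div, zero_sub] at hstatic
  have hgrav : 0 < 4 * π * G / 3 * K ^ 2 * r * δ r * δ r := by positivity
  rw [heq, sub_self, mul_zero, zero_div, sub_zero]
  exact neg_of_mul_neg_right (by linarith) (ha _ hδ).le

lemma eventually_deriv_delta_sub_eta_neg (h : IsRegularStatic prad ptan G K R δ η)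
    {κ ν : ℝ} (hG : 0 < G) (hK : 0 < K) (helastic : IsElasticConst κ ν prad ptan)
    (ha : 0 < ahat prad (δ 0) (δ 0)) (hR : 0 < R) :
    ∀ᶠ r in 𝓝[>] 0, 0 ≤ δ r - η r → deriv δ r - 3 * (δ r - η r) / r < 0 := by
  have hpair : Tendsto (fun r => (δ r, η r)) (𝓝[>] 0) (𝓝 (δ 0, δ 0)) :=
    (h.tendsto_delta hR).prodMk_nhds (h.tendsto_eta hR)
  filter_upwards [hpair.eventually (helastic.eventually_abs_anisotropicStress_le
    (h.delta_pos ⟨le_rfl, hR⟩) ha), Ioo_mem_nhdsGT hR] with r ⟨hapos, hbound⟩ hr hgap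
  have hr0 := hr.1
  have hδ := h.delta_pos (Ioo_subset_Ico_self hr)
  have hη := h.eta_pos hr
  have hgrav : 0 < 4 * π * G / 3 * K ^ 2 * r * η r * δ r := by positivity
  rw [abs_of_nonneg hgap] at hbound
  have hstress : anisotropicStress prad ptan (δ r) (η r) / r ≤
      ahat prad (δ r) (η r) * ((δ r - η r) / r) := by
    rw [← mul_div_assoc]
    exact div_le_div_of_nonneg_right ((le_abs_self _).trans hbound) hr0.le
  have hderiv : deriv δ r < (δ r - η r) / r :=
    lt_of_mul_lt_mul_left (by linarith [h.ahat_mul_deriv_eq hr]) hapos.le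
  have hgap' : 0 ≤ (δ r - η r) / r := div_nonneg hgap hr0.le
  rw [mul_div_assoc]
  linarith

end IsRegularStatic

theorem regular_static_eta_gt_delta_general (κ ν G K R : ℝ) (hG : 0 < G) (hK : 0 < K)
    (prad ptan : ℝ → ℝ → ℝ) (helastic : IsElasticConst κ ν prad ptan)
    (ha : ∀ d : ℝ, 0 < d → 0 < ahat prad d d)
    (δ η : ℝ → ℝ) (hreg : IsRegularStatic prad ptan G K R δ η) :
    ∀ r ∈ Ioo 0 R, δ r < η r ∧ deriv η r < 0 := by
  intro r hr
  have hR : 0 < R := hr.1.trans hr.2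
  have hgap : δ r - η r < 0 :=
    neg_of_tendsto_nhdsGT_zero (fun x hx => hreg.hasDerivAt_delta_sub_eta hx)
      (by simpa using (hreg.tendsto_delta hR).sub (hreg.tendsto_eta hR))
      (fun x hx hx0 =>
        hreg.deriv_delta_sub_eta_neg_of_eq hG hK helastic.2.2.1 ha hx (sub_eq_zero.1 hx0))
      (hreg.eventually_deriv_delta_sub_eta_neg hG hK helastic
        (ha _ (hreg.delta_pos ⟨le_rfl, hR⟩)) hR) r hr
  refine ⟨by linarith, ?_⟩
  rw [(hreg.hasDerivAt_eta hr).deriv]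
  exact div_neg_of_neg_of_pos (by linarith) hr.1

/-- If `â(δ,δ) > 0` for all `δ > 0`, then along any regular static solution one has
`η(r) > δ(r)` and `η'(r) < 0` for all `r ∈ (0,R)`. -/
theorem regular_static_eta_gt_delta (κ ν G K R : ℝ) (hκ : 0 < κ)
    (hν : ν ∈ Ioc (-1 : ℝ) (1/2)) (hG : 0 < G) (hK : 0 < K) (hR : 0 < R)
    (prad ptan : ℝ → ℝ → ℝ) (helastic : IsElasticConst κ ν prad ptan)
    (ha : ∀ d : ℝ, 0 < d → 0 < ahat prad d d)
    (δ η : ℝ → ℝ) (hreg : IsRegularStatic prad ptan G K R δ η) :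
    ∀ r ∈ Ioo 0 R, δ r < η r ∧ deriv η r < 0 :=
  regular_static_eta_gt_delta_general κ ν G K R hG hK prad ptan helastic ha δ η hreg
end
end
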